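/- For every integer r and point (s,t) ∈ ℤ², one has (M − A^{2r})(s,t) = A^r(M − Id)(A^r(s,t)); consequently (m,k) lies in the image of M − A^{2r} if and only if α^{−r}(m,k) lies in the image of M − Id, i.e. iff the coordinate sum of α^{−r}(m,k) is even. -/

import Mathlib

/-- The multiplicative group structure on `AddAut A` (composition), as in the older Mathlib. -/
instance AddAut.groupOld (A : Type*) [Add A] : Group (AddAut A) where
  mul g h := AddEquiv.trans h g
  one := AddEquiv.refl _
  inv := AddEquiv.symm
  mul_assoc _ _ _ := rfl
  one_mul _ := rfl
  mul_one _ := rfl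
  inv_mul_cancel := AddEquiv.self_trans_symm

@[simp]
lemma AddAut.mul_apply_old {A : Type*} [Add A] (e₁ e₂ : AddAut A) (m : A) :
    (e₁ * e₂) m = e₁ (e₂ m) := rfl

@[simp]
lemma AddAut.one_apply_old {A : Type*} [Add A] (m : A) : (1 : AddAut A) m = m := rfl

@[simp]
lemma AddAut.inv_apply_old {A : Type*} [Add A] (e : AddAut A) (m : A) :
    e⁻¹ m = e.symm m := rfl

/-- The automorphism of ℤ² given by the matrix A = [[2,1],[1,1]]. -/
def α : AddAut (ℤ × ℤ) where
  toFun p := (2 * p.1 + p.2, p.1 + p.2)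
  invFun p := (p.1 - p.2, -p.1 + 2 * p.2)
  left_inv p := by obtain ⟨x, y⟩ := p; simp only [Prod.mk.injEq]; constructor <;> ring
  right_inv p := by obtain ⟨x, y⟩ := p; simp only [Prod.mk.injEq]; constructor <;> ring
  map_add' p q := by simp only [Prod.fst_add, Prod.snd_add, Prod.mk_add_mk, Prod.mk.injEq]; constructor <;> ring

/-- The automorphism of ℤ² given by the matrix M = [[0,1],[-1,0]]. -/
def μ : AddAut (ℤ × ℤ) where
  toFun p := (p.2, -p.1)
  invFun p := (-p.2, p.1)
  left_inv p := by simp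
  right_inv p := by simp
  map_add' p q := by simp only [Prod.fst_add, Prod.snd_add, Prod.mk_add_mk, Prod.mk.injEq]; constructor <;> first | trivial | ring

/-- The semidirect product G = ℤ² ⋊_α ℤ. -/
@[ext] structure G where
  x : ℤ × ℤ
  n : ℤ

instance : Mul G := ⟨fun g h => ⟨g.x + (α ^ g.n) h.x, g.n + h.n⟩⟩
instance : One G := ⟨⟨0, 0⟩⟩
instance : Inv G := ⟨fun g => ⟨-((α ^ (-g.n)) g.x), -g.n⟩⟩

lemma G.mul_def (g h : G) : g * h = ⟨g.x + (α ^ g.n) h.x, g.n + h.n⟩ := rfl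
lemma G.one_def : (1 : G) = ⟨0, 0⟩ := rfl
lemma G.inv_def (g : G) : g⁻¹ = ⟨-((α ^ (-g.n)) g.x), -g.n⟩ := rfl

instance : Group G where
  mul_assoc a b c := by
    ext : 1
    · show (a.x + (α ^ a.n) b.x) + (α ^ (a.n + b.n)) c.x
        = a.x + (α ^ a.n) (b.x + (α ^ b.n) c.x)
      rw [zpow_add, AddAut.mul_apply_old, map_add]; abel
    · show a.n + b.n + c.n = a.n + (b.n + c.n); ring
  one_mul a := by
    ext : 1
    · show (0 : ℤ × ℤ) + (α ^ (0:ℤ)) a.x = a.x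
      simp
    · show (0 : ℤ) + a.n = a.n; ring
  mul_one a := by
    ext : 1
    · show a.x + (α ^ a.n) 0 = a.x
      simp
    · show a.n + 0 = a.n; ring
  inv_mul_cancel a := by
    ext : 1
    · show -((α ^ (-a.n)) a.x) + (α ^ (-a.n)) a.x = 0
      simp
    · show -a.n + a.n = 0; ring

lemma mu_alpha : μ * α = α⁻¹ * μ := by
  apply AddEquiv.ext
  intro p
  rw [AddAut.mul_apply_old, AddAut.mul_apply_old]
  show μ (α p) = α.symm (μ p)
  show ((α p).2, -(α p).1) = α.symm (p.2, -p.1)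
  show ((p.1 + p.2 : ℤ), -(2 * p.1 + p.2)) = (p.2 - (-p.1), -p.2 + 2 * (-p.1))
  simp only [Prod.mk.injEq]; constructor <;> ring

lemma mu_alpha_conj : μ * α * μ⁻¹ = α⁻¹ := by
  rw [mu_alpha, mul_assoc]
  simp

lemma mu_alpha_zpow (n : ℤ) : μ * α ^ n = α ^ (-n) * μ := by
  have h : MulAut.conj μ (α ^ n) = α ^ (-n) := by
    rw [map_zpow, MulAut.conj_apply, mu_alpha_conj, inv_zpow, zpow_neg]
  rw [MulAut.conj_apply] at h
  calc μ * α ^ n = (μ * α ^ n * μ⁻¹) * μ := by group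
    _ = α ^ (-n) * μ := by rw [h]

/-- The automorphism φ((m,k),n) = ((k,-m),-n). -/
def φ : G ≃* G where
  toFun g := ⟨μ g.x, -g.n⟩
  invFun g := ⟨μ⁻¹ g.x, -g.n⟩
  left_inv g := by
    ext : 1
    · show μ⁻¹ (μ g.x) = g.x
      simp
    · simp
  right_inv g := by
    ext : 1
    · show μ (μ⁻¹ g.x) = g.x
      simp
    · simp
  map_mul' g h := by
    ext : 1
    · show μ (g.x + (α ^ g.n) h.x) = μ g.x + (α ^ (-g.n)) (μ h.x)
      rw [map_add]
      congr 1
      calc μ ((α ^ g.n) h.x) = (μ * α ^ g.n) h.x := rfl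
        _ = (α ^ (-g.n) * μ) h.x := by rw [mu_alpha_zpow]
        _ = (α ^ (-g.n)) (μ h.x) := rfl
    · show -(g.n + h.n) = -g.n + -h.n; ring

/-! The identity `M - A^{2r} = A^r (M - Id) A^r` only uses that `A^r M A^r = M`, which follows
from `M A = A⁻¹ M`; the image of `M - A^{2r}` is then the image of `M - Id` transported by `A^r`. -/

namespace AddAut

variable {V : Type*} [AddGroup V] {m a : AddAut V}

theorem apply_sub_mul_self_apply (h : a * m * a = m) (p : V) :
    m p - (a * a) p = a (m (a p) - a p) := by
  rw [map_sub]
  conv_lhs => rw [← h]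
  rfl

theorem exists_apply_sub_mul_self_apply_eq_iff (h : a * m * a = m) (q : V) :
    (∃ p, m p - (a * a) p = q) ↔ ∃ p, m p - p = a⁻¹ q := by
  constructor
  · rintro ⟨p, rfl⟩
    exact ⟨a p, by rw [apply_sub_mul_self_apply h, inv_apply_old, AddEquiv.symm_apply_apply]⟩
  · rintro ⟨p, hp⟩
    refine ⟨a⁻¹ p, ?_⟩
    rw [apply_sub_mul_self_apply h, inv_apply_old, AddEquiv.apply_symm_apply, hp, inv_apply_old,
      AddEquiv.apply_symm_apply]

end AddAut

theorem alpha_zpow_mul_mu_mul_alpha_zpow (r : ℤ) : α ^ r * μ * α ^ r = μ := by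
  rw [mul_assoc, mu_alpha_zpow, ← mul_assoc, ← zpow_add, add_neg_cancel, zpow_zero, one_mul]

theorem exists_mu_apply_sub_self_eq_iff (w : ℤ × ℤ) :
    (∃ p, μ p - p = w) ↔ Even (w.1 + w.2) := by
  -- `μ (x, y) - (x, y) = (y - x, -x - y)`
  constructor
  · rintro ⟨p, rfl⟩
    exact ⟨-p.1, show (p.2 - p.1) + (-p.1 - p.2) = -p.1 + -p.1 by ring⟩
  · rintro ⟨c, hc⟩
    refine ⟨(-c, w.1 - c), Prod.ext ?_ ?_⟩
    · show w.1 - c - -c = w.1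
      ring
    · show -(-c) - (w.1 - c) = w.2
      omega

theorem stmt19 (r : ℤ) :
    (∀ p : ℤ × ℤ, μ p - (α ^ (2 * r)) p = (α ^ r) (μ ((α ^ r) p) - (α ^ r) p)) ∧
    (∀ q : ℤ × ℤ, (∃ p : ℤ × ℤ, μ p - (α ^ (2 * r)) p = q) ↔
      Even (((α ^ (-r)) q).1 + ((α ^ (-r)) q).2)) := by
  have hconj := alpha_zpow_mul_mu_mul_alpha_zpow r
  have hsq : α ^ (2 * r) = α ^ r * α ^ r := by rw [two_mul, zpow_add]
  refine ⟨fun p => hsq ▸ AddAut.apply_sub_mul_self_apply hconj p, fun q => ?_⟩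
  rw [hsq, AddAut.exists_apply_sub_mul_self_apply_eq_iff hconj, zpow_neg,
    exists_mu_apply_sub_self_eq_iff]
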